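/- Let R > 0, α ∈ ℝ, y_1,…,y_m ∈ ℝ², and let 𝒩 and Φ̂ be the particle counting function and normalized flux. Let R/2 ≤ r₁ < r₂, let q ∈ ℤ, and suppose ρ(r) = |Φ̂(r) − 2q|² for all r ∈ (r₁, r₂) with ρ(r₀) = 0 for some r₀ ∈ (r₁, r₂). Then, with δ(r) := min{r − r₁, r₂ − r} and 𝒩'(r) := Σ_l f(|y_l|, r) the a.e. derivative of 𝒩: ∫_{r₁}^{r₂} ρ(r) r^{-1} dr ≥ (2α² / (r₂ (r₂ − r₁))) · ( ∫_{r₁}^{r₂} 𝒩'(r) δ(r) dr )². (General integral bound, Lemma 4.8.) -/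

import Mathlib

/-!
Computing `|B_r(0) ∩ B_R(y)|` in polar coordinates about the origin shows that `𝒩` is a
primitive of `𝒩' ≥ 0`. Hence `Φ̂(r) - 2q = 2α ∫_{r₀}^r 𝒩'`, since it vanishes at `r₀`, and
integrating by parts on either side of `r₀` gives `∫_{r₁}^{r₂} |Φ̂ - 2q| = 2|α| ∫ 𝒩' w` for the
tent `w ≥ δ` peaked at `r₀`. Cauchy–Schwarz and `r ≤ r₂` then give
`∫ ρ/r ≥ (∫ |Φ̂ - 2q|)² / (r₂ (r₂ - r₁)) ≥ 4α² (∫ 𝒩' δ)² / (r₂ (r₂ - r₁))`.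
-/

open MeasureTheory Real Set

noncomputable section

/-- The plane `ℝ²`. -/
abbrev Plane : Type := EuclideanSpace ℝ (Fin 2)

/-- The particle counting function `𝒩(r) = Σ_l |B_r(0) ∩ B_R(y_l)| / (πR²)`. -/
def countN (R : ℝ) {m : ℕ} (y : Fin m → Plane) (r : ℝ) : ℝ :=
  ∑ l : Fin m, (volume (Metric.ball (0 : Plane) r ∩ Metric.ball (y l) R)).toReal / (π * R ^ 2)

/-- The effective coupling `ρ(r) = min_{q ∈ ℤ} |Φ̂(r) - 2q|²` for the normalized flux
`Φ̂(r) = α(1 + 2𝒩(r))`. -/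
def rhoFun (α R : ℝ) {m : ℕ} (y : Fin m → Plane) (r : ℝ) : ℝ :=
  sInf {t : ℝ | ∃ q : ℤ, t = (α * (1 + 2 * countN R y r) - 2 * q) ^ 2}

/-- The one-particle profile `f(d,r)`: `2r/R²` for `r ≤ R - d`; `0` for `r > R + d` or
`r < d - R`; and `(2r/(πR²)) arccos((d²+r²-R²)/(2dr))` otherwise, so that
`𝒩'(r) = Σ_l f(|y_l|, r)` is the a.e. derivative of `𝒩`. -/
def profile (R d r : ℝ) : ℝ :=
  if r ≤ R - d then 2 * r / R ^ 2
  else if R + d < r ∨ r < d - R then 0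
  else 2 * r / (π * R ^ 2) * Real.arccos ((d ^ 2 + r ^ 2 - R ^ 2) / (2 * d * r))

/-- `𝒩'(r) = Σ_l f(|y_l|, r)`. -/
def countN' (R : ℝ) {m : ℕ} (y : Fin m → Plane) (r : ℝ) : ℝ :=
  ∑ l : Fin m, profile R ‖y l‖ r

theorem abs_profile_le {R : ℝ} (hR : 0 < R) (d t : ℝ) :
    |profile R d t| ≤ 2 * |t| / R ^ 2 := by
  have hπ : 0 < π := pi_pos
  unfold profile
  split_ifs
  · rw [abs_div, abs_mul, abs_two, abs_of_pos (by positivity : 0 < R ^ 2)]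
  · rw [abs_zero]; positivity
  · rw [abs_mul, abs_of_nonneg (arccos_nonneg _), abs_div, abs_mul, abs_two,
      abs_of_pos (by positivity : 0 < π * R ^ 2)]
    calc 2 * |t| / (π * R ^ 2) * arccos _ ≤ 2 * |t| / (π * R ^ 2) * π := by
          gcongr; exact arccos_le_pi _
      _ = 2 * |t| / R ^ 2 := by field_simp

theorem profile_nonneg (R d : ℝ) {t : ℝ} (ht : 0 ≤ t) : 0 ≤ profile R d t := by
  unfold profile
  split_ifs
  · positivity
  · exact le_rfl
  · exact mul_nonneg (by positivity) (arccos_nonneg _)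

theorem measurable_profile (R d : ℝ) : Measurable (profile R d) := by
  unfold profile
  refine Measurable.ite (measurableSet_le measurable_id measurable_const) (by fun_prop) ?_
  refine Measurable.ite ?_ measurable_const ?_
  · exact (measurableSet_lt measurable_const measurable_id).union
      (measurableSet_lt measurable_id measurable_const)
  · exact (by fun_prop : Measurable fun t : ℝ => 2 * t / (π * R ^ 2)).mul
      (continuous_arccos.measurable.comp (by fun_prop))

theorem intervalIntegrable_profile {R : ℝ} (hR : 0 < R) (d a b : ℝ) :
    IntervalIntegrable (profile R d) volume a b := by
  refine ((by fun_prop : Continuous fun t : ℝ => 2 * |t| / R ^ 2).intervalIntegrable a b).mono_fun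
    (measurable_profile R d).aestronglyMeasurable (ae_of_all _ fun t => ?_)
  simp only [Real.norm_eq_abs, abs_of_nonneg (by positivity : 0 ≤ 2 * |t| / R ^ 2)]
  exact abs_profile_le hR d t

theorem lt_cos_iff_abs_lt_arccos {θ : ℝ} (c : ℝ) (hθ : |θ| < π) :
    c < cos θ ↔ |θ| < arccos c := by
  rw [← cos_abs]
  constructor
  · intro h
    rcases le_or_gt c (-1) with hc | hc
    · rwa [arccos_of_le_neg_one hc]
    · rw [← arccos_cos (abs_nonneg θ) hθ.le]
      exact arccos_lt_arccos hc.le h (cos_le_one _)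
  · intro h
    rcases le_or_gt c (-1) with hc | hc
    · have := cos_lt_cos_of_nonneg_of_le_pi (abs_nonneg θ) le_rfl hθ
      rw [cos_pi] at this
      linarith
    · have hc₁ : c < 1 := arccos_pos.1 ((abs_nonneg θ).trans_lt h)
      have := cos_lt_cos_of_nonneg_of_le_pi (abs_nonneg θ) (arccos_le_pi c) h
      rwa [cos_arccos hc.le hc₁.le] at this

theorem sep_lt_cos_eq_Ioo_arccos (c : ℝ) :
    {θ ∈ Ioo (-π) π | c < cos θ} = Ioo (-arccos c) (arccos c) := by
  ext θ
  simp only [mem_Ioo, ← abs_lt]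
  constructor
  · rintro ⟨hθ, hc⟩
    exact (lt_cos_iff_abs_lt_arccos c hθ).1 hc
  · intro hθ
    have hθπ := hθ.trans_le (arccos_le_pi c)
    exact ⟨hθπ, (lt_cos_iff_abs_lt_arccos c hθπ).2 hθ⟩

theorem norm_polarCoord_symm_sub_ofReal_sq (t θ d : ℝ) :
    ‖Complex.polarCoord.symm (t, θ) - d‖ ^ 2 = t ^ 2 + d ^ 2 - 2 * t * d * cos θ := by
  rw [Complex.sq_norm, Complex.normSq_apply]
  simp only [Complex.polarCoord_symm_apply, Complex.sub_re, Complex.sub_im, Complex.mul_re,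
    Complex.mul_im, Complex.add_re, Complex.add_im, Complex.ofReal_re, Complex.ofReal_im,
    Complex.I_re, Complex.I_im]
  nlinarith [sin_sq_add_cos_sq θ]

def polarAngles (S : Set ℂ) (t : ℝ) : Set ℝ :=
  {θ ∈ Ioo (-π) π | Complex.polarCoord.symm (t, θ) ∈ S}

theorem volume_eq_lintegral_mul_volume_polarAngles {S : Set ℂ} (hS : MeasurableSet S) :
    volume S = ∫⁻ t in Ioi 0, ENNReal.ofReal t * volume (polarAngles S t) := by
  have hpolar : Measurable fun p : ℝ × ℝ => Complex.polarCoord.symm p := by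
    simp only [Complex.polarCoord_symm_apply]; fun_prop
  have hmeas : Measurable fun p : ℝ × ℝ =>
      ENNReal.ofReal p.1 * S.indicator 1 (Complex.polarCoord.symm p) :=
    (by fun_prop : Measurable fun p : ℝ × ℝ => ENNReal.ofReal p.1).mul
      ((measurable_const.indicator hS).comp hpolar)
  rw [← lintegral_indicator_one hS, ← Complex.lintegral_comp_polarCoord_symm, polarCoord_target]
  change ∫⁻ p in Ioi (0 : ℝ) ×ˢ Ioo (-π) π,
    ENNReal.ofReal p.1 * S.indicator 1 (Complex.polarCoord.symm p) = _
  rw [Measure.volume_eq_prod, ← Measure.prod_restrict, lintegral_prod _ hmeas.aemeasurable]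
  refine lintegral_congr fun t => ?_
  have hslice : MeasurableSet {θ | Complex.polarCoord.symm (t, θ) ∈ S} :=
    hS.preimage (hpolar.comp measurable_prodMk_left)
  change ∫⁻ θ in Ioo (-π) π, ENNReal.ofReal t *
    {θ | Complex.polarCoord.symm (t, θ) ∈ S}.indicator 1 θ = _
  rw [lintegral_const_mul _ (measurable_one.indicator hslice), lintegral_indicator_one hslice,
    Measure.restrict_apply hslice, inter_comm]
  rfl

theorem polarAngles_ball_zero_of_lt {R t : ℝ} (ht : 0 < t) (htR : t < R) :
    polarAngles (Metric.ball 0 R) t = Ioo (-π) π := by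
  ext θ
  simp [polarAngles, abs_of_pos ht, htR]

theorem polarAngles_ball_zero_of_le {R t : ℝ} (ht : 0 < t) (hRt : R ≤ t) :
    polarAngles (Metric.ball 0 R) t = ∅ := by
  ext θ
  simp [polarAngles, abs_of_pos ht, hRt]

theorem polarAngles_ball_ofReal {R d t : ℝ} (hR : 0 ≤ R) (hd : 0 < d) (ht : 0 < t) :
    polarAngles (Metric.ball (d : ℂ) R) t
      = Ioo (-arccos ((d ^ 2 + t ^ 2 - R ^ 2) / (2 * d * t)))
          (arccos ((d ^ 2 + t ^ 2 - R ^ 2) / (2 * d * t))) := by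
  rw [← sep_lt_cos_eq_Ioo_arccos]
  ext θ
  simp only [polarAngles, mem_sep_iff, Metric.mem_ball, dist_eq_norm,
    ← sq_lt_sq₀ (norm_nonneg _) hR, norm_polarCoord_symm_sub_ofReal_sq,
    div_lt_iff₀ (by positivity : 0 < 2 * d * t)]
  exact and_congr_right fun _ => by constructor <;> intro h <;> linarith

theorem pi_mul_sq_mul_profile {R d t : ℝ} (hR : 0 < R) (hd : 0 < d) (ht : 0 < t) :
    π * R ^ 2 * profile R d t = t * (2 * arccos ((d ^ 2 + t ^ 2 - R ^ 2) / (2 * d * t))) := by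
  have hπ : 0 < π := pi_pos
  unfold profile
  split_ifs with h₁ h₂
  · rw [arccos_of_le_neg_one (by rw [div_le_iff₀ (by positivity)]; nlinarith)]
    field_simp
  · rw [arccos_of_one_le (by
      rw [le_div_iff₀ (by positivity)]; rcases h₂ with h | h <;> nlinarith)]
    ring
  · field_simp

-- For `d = 0` the identity fails at `t = R`, where `profile R 0` jumps.
theorem ofReal_mul_volume_polarAngles_ball {R d t : ℝ} (hR : 0 < R) (hd : 0 ≤ d) (ht : 0 < t)
    (htR : t ≠ R) :
    ENNReal.ofReal t * volume (polarAngles (Metric.ball (d : ℂ) R) t)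
      = ENNReal.ofReal (π * R ^ 2 * profile R d t) := by
  have hπ : 0 < π := pi_pos
  rcases hd.eq_or_lt with rfl | hd
  · rw [Complex.ofReal_zero]
    rcases htR.lt_or_gt with htR | hRt
    · rw [polarAngles_ball_zero_of_lt ht htR, Real.volume_Ioo, ← ENNReal.ofReal_mul ht.le,
        profile, if_pos (by linarith)]
      congr 1
      field_simp
      ring
    · rw [polarAngles_ball_zero_of_le ht hRt.le, measure_empty, mul_zero, profile,
        if_neg (by linarith), if_pos (Or.inl (by linarith)), mul_zero, ENNReal.ofReal_zero]
  · rw [polarAngles_ball_ofReal hR.le hd ht, Real.volume_Ioo, ← ENNReal.ofReal_mul ht.le,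
      pi_mul_sq_mul_profile hR hd ht]
    congr 2
    ring

theorem ofReal_mul_volume_polarAngles_ball_inter_ball {R d r t : ℝ} (hR : 0 < R) (hd : 0 ≤ d)
    (ht : 0 < t) (htR : t ≠ R) :
    ENNReal.ofReal t * volume (polarAngles (Metric.ball 0 r ∩ Metric.ball (d : ℂ) R) t)
      = (Iio r).indicator (fun t => ENNReal.ofReal (π * R ^ 2 * profile R d t)) t := by
  have hinter : polarAngles (Metric.ball 0 r ∩ Metric.ball (d : ℂ) R) t
      = polarAngles (Metric.ball 0 r) t ∩ polarAngles (Metric.ball (d : ℂ) R) t := by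
    ext θ
    simp only [polarAngles, mem_sep_iff, mem_inter_iff]
    tauto
  by_cases htr : t < r
  · rw [indicator_of_mem (show t ∈ Iio r from htr), hinter, polarAngles_ball_zero_of_lt ht htr,
      inter_eq_right.2 (show polarAngles _ t ⊆ _ from sep_subset _ _),
      ofReal_mul_volume_polarAngles_ball hR hd ht htR]
  · rw [indicator_of_notMem (show t ∉ Iio r from htr), hinter,
      polarAngles_ball_zero_of_le ht (not_lt.1 htr), empty_inter, measure_empty, mul_zero]

theorem volume_ball_inter_ball_ofReal {R d r : ℝ} (hR : 0 < R) (hd : 0 ≤ d) (hr : 0 ≤ r) :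
    volume (Metric.ball (0 : ℂ) r ∩ Metric.ball (d : ℂ) R)
      = ENNReal.ofReal (∫ t in 0..r, π * R ^ 2 * profile R d t) := by
  have hae : ∀ᵐ t : ℝ, t ≠ R := by simp [ae_iff, measure_singleton]
  calc volume (Metric.ball (0 : ℂ) r ∩ Metric.ball (d : ℂ) R)
      = ∫⁻ t in Ioi 0, (Iio r).indicator
          (fun t => ENNReal.ofReal (π * R ^ 2 * profile R d t)) t := by
        rw [volume_eq_lintegral_mul_volume_polarAngles
          (measurableSet_ball.inter measurableSet_ball)]
        refine setLIntegral_congr_fun_ae measurableSet_Ioi ?_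
        filter_upwards [hae] with t htR ht
        exact ofReal_mul_volume_polarAngles_ball_inter_ball hR hd ht htR
    _ = ENNReal.ofReal (∫ t in 0..r, π * R ^ 2 * profile R d t) := by
        rw [lintegral_indicator measurableSet_Iio, Measure.restrict_restrict measurableSet_Iio,
          Iio_inter_Ioi, intervalIntegral.integral_of_le hr, integral_Ioc_eq_integral_Ioo,
          ofReal_integral_eq_lintegral_ofReal]
        · exact (((intervalIntegrable_profile hR d 0 r).const_mul _).1).mono_set
            Ioo_subset_Ioc_self
        · refine ae_restrict_of_forall_mem measurableSet_Ioo fun t ht => ?_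
          exact mul_nonneg (by positivity) (profile_nonneg R d ht.1.le)

theorem volume_ball_inter_ball_eq_complex (R r : ℝ) (y : Plane) :
    volume (Metric.ball (0 : Plane) r ∩ Metric.ball y R)
      = volume (Metric.ball (0 : ℂ) r ∩ Metric.ball (‖y‖ : ℂ) R) := by
  set F : ℂ ≃ₗᵢ[ℝ] Plane := Complex.orthonormalBasisOneI.repr
  set G : ℂ ≃ₗᵢ[ℝ] Plane := F.trans (Submodule.reflection (ℝ ∙ (F ‖y‖ - y))ᗮ)
  have hG : G.symm y = ‖y‖ := by
    rw [LinearIsometryEquiv.symm_apply_eq]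
    exact (Submodule.reflection_sub (by simp [F])).symm
  rw [← G.measurePreserving.measure_preimage
      (measurableSet_ball.inter measurableSet_ball).nullMeasurableSet, preimage_inter,
    ← G.coe_toIsometryEquiv, IsometryEquiv.preimage_ball, IsometryEquiv.preimage_ball]
  simp [hG]

theorem countN_eq_integral {R : ℝ} (hR : 0 < R) {m : ℕ} (y : Fin m → Plane) {r : ℝ}
    (hr : 0 ≤ r) :
    countN R y r = ∫ t in 0..r, countN' R y t := by
  have hπ : 0 < π := pi_pos
  unfold countN countN'
  rw [intervalIntegral.integral_finsetSum fun l _ => intervalIntegrable_profile hR ‖y l‖ 0 r]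
  refine Finset.sum_congr rfl fun l _ => ?_
  rw [volume_ball_inter_ball_eq_complex, volume_ball_inter_ball_ofReal hR (norm_nonneg _) hr,
    ENNReal.toReal_ofReal, intervalIntegral.integral_const_mul]
  · field_simp
  · exact intervalIntegral.integral_nonneg hr fun t ht =>
      mul_nonneg (by positivity) (profile_nonneg R _ ht.1)

theorem countN'_nonneg (R : ℝ) {m : ℕ} (y : Fin m → Plane) {t : ℝ} (ht : 0 ≤ t) :
    0 ≤ countN' R y t :=
  Finset.sum_nonneg fun _ _ => profile_nonneg R _ ht

theorem intervalIntegrable_countN' {R : ℝ} (hR : 0 < R) {m : ℕ} (y : Fin m → Plane)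
    (a b : ℝ) :
    IntervalIntegrable (countN' R y) volume a b := by
  have hsum : countN' R y = ∑ l, profile R ‖y l‖ :=
    funext fun t => (Finset.sum_apply t _ _).symm
  rw [hsum]
  exact IntervalIntegrable.sum _ fun l _ => intervalIntegrable_profile hR ‖y l‖ a b

theorem countN_sub_countN {R : ℝ} (hR : 0 < R) {m : ℕ} (y : Fin m → Plane) {u v : ℝ}
    (hu : 0 ≤ u) (hv : 0 ≤ v) :
    countN R y v - countN R y u = ∫ t in u..v, countN' R y t := by
  rw [countN_eq_integral hR y hu, countN_eq_integral hR y hv,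
    intervalIntegral.integral_interval_sub_left (intervalIntegrable_countN' hR y 0 v)
      (intervalIntegrable_countN' hR y 0 u)]

section Calculus

variable {D : ℝ → ℝ} {a b c : ℝ}

theorem integral_primitive_eq (hD : IntervalIntegrable D volume a b) (hc : c ∈ uIcc a b)
    (k : ℝ) :
    ∫ s in a..b, ∫ t in c..s, D t
      = (∫ t in c..b, D t) * (b - k) - (∫ t in c..a, D t) * (a - k)
        - ∫ s in a..b, D s * (s - k) := by
  have h := (hD.absolutelyContinuousOnInterval_intervalIntegral hc).integral_mul_deriv_eq_deriv_mul
    (ContDiffOn.absolutelyContinuousOnInterval (by fun_prop : ContDiffOn ℝ 1 (· - k) _))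
  have hderiv (s : ℝ) : deriv (· - k) s = 1 := by simp
  simp only [hderiv, mul_one] at h
  rw [h]
  congr 1
  refine intervalIntegral.integral_congr_ae ?_
  filter_upwards [hD.ae_hasDerivAt_integral] with s hs hs'
  rw [(hs (uIoc_subset_uIcc hs') c hc).deriv]

theorem integral_integral_from_left (hD : IntervalIntegrable D volume a b) :
    ∫ s in a..b, ∫ t in a..s, D t = ∫ s in a..b, D s * (b - s) := by
  rw [integral_primitive_eq hD left_mem_uIcc b]
  simp only [sub_self, mul_zero, intervalIntegral.integral_same, zero_mul, zero_sub]
  rw [← intervalIntegral.integral_neg]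
  congr with s
  ring

theorem integral_integral_to_right (hD : IntervalIntegrable D volume a b) :
    ∫ s in a..b, ∫ t in s..b, D t = ∫ s in a..b, D s * (s - a) := by
  have hsymm (s : ℝ) : ∫ t in s..b, D t = -∫ t in b..s, D t :=
    intervalIntegral.integral_symm b s
  simp_rw [hsymm]
  rw [intervalIntegral.integral_neg, integral_primitive_eq hD right_mem_uIcc a]
  simp

theorem integral_mul_min_le_integral_abs_primitive (hD : IntervalIntegrable D volume a b)
    (hD₀ : ∀ t ∈ Icc a b, 0 ≤ D t) (hc : c ∈ Icc a b) :
    ∫ t in a..b, D t * min (t - a) (b - t) ≤ ∫ s in a..b, |∫ t in c..s, D t| := by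
  obtain ⟨hac, hcb⟩ := hc
  have hc' : c ∈ uIcc a b := by rw [uIcc_of_le (hac.trans hcb)]; exact ⟨hac, hcb⟩
  have hF : ContinuousOn (fun s => |∫ t in c..s, D t|) (uIcc a b) :=
    (hD.absolutelyContinuousOnInterval_intervalIntegral hc').continuousOn.abs
  have hweight {u v : ℝ} (huv : uIcc u v ⊆ uIcc a b) {w : ℝ → ℝ}
      (hw : ContinuousOn w (uIcc a b)) : IntervalIntegrable (fun t => D t * w t) volume u v :=
    (hD.mono_set huv).mul_continuousOn (hw.mono huv)
  have hmin : ContinuousOn (fun t => min (t - a) (b - t)) (uIcc a b) := by fun_prop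
  rw [← intervalIntegral.integral_add_adjacent_intervals
      (hweight (uIcc_subset_uIcc_left hc') hmin) (hweight (uIcc_subset_uIcc_right hc') hmin),
    ← intervalIntegral.integral_add_adjacent_intervals
      ((hF.mono (uIcc_subset_uIcc_left hc')).intervalIntegrable)
      ((hF.mono (uIcc_subset_uIcc_right hc')).intervalIntegrable)]
  gcongr
  · have hleft : ∫ s in a..c, |∫ t in c..s, D t| = ∫ s in a..c, ∫ t in s..c, D t := by
      refine intervalIntegral.integral_congr fun s hs => ?_
      rw [uIcc_of_le hac] at hs
      rw [intervalIntegral.integral_symm, abs_neg, abs_of_nonneg (intervalIntegral.integral_nonneg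
        hs.2 fun t ht => hD₀ t ⟨hs.1.trans ht.1, ht.2.trans hcb⟩)]
    rw [hleft, integral_integral_to_right (hD.mono_set (uIcc_subset_uIcc_left hc'))]
    refine intervalIntegral.integral_mono_on hac (hweight (uIcc_subset_uIcc_left hc') hmin)
      (hweight (uIcc_subset_uIcc_left hc') (by fun_prop)) fun t ht => ?_
    exact mul_le_mul_of_nonneg_left (min_le_left _ _) (hD₀ t ⟨ht.1, ht.2.trans hcb⟩)
  · have hright : ∫ s in c..b, |∫ t in c..s, D t| = ∫ s in c..b, ∫ t in c..s, D t := by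
      refine intervalIntegral.integral_congr fun s hs => ?_
      rw [uIcc_of_le hcb] at hs
      exact abs_of_nonneg (intervalIntegral.integral_nonneg hs.1 fun t ht =>
        hD₀ t ⟨hac.trans ht.1, ht.2.trans hs.2⟩)
    rw [hright, integral_integral_from_left (hD.mono_set (uIcc_subset_uIcc_right hc'))]
    refine intervalIntegral.integral_mono_on hcb (hweight (uIcc_subset_uIcc_right hc') hmin)
      (hweight (uIcc_subset_uIcc_right hc') (by fun_prop)) fun t ht => ?_
    exact mul_le_mul_of_nonneg_left (min_le_right _ _) (hD₀ t ⟨hac.trans ht.1, ht.2⟩)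

theorem sq_intervalIntegral_le_mul_integral_sq {f : ℝ → ℝ} (hab : a ≤ b)
    (hf : IntervalIntegrable f volume a b)
    (hf₂ : IntervalIntegrable (fun x => f x ^ 2) volume a b) :
    (∫ x in a..b, f x) ^ 2 ≤ (b - a) * ∫ x in a..b, f x ^ 2 := by
  rcases hab.eq_or_lt with rfl | hab
  · simp
  set I := ∫ x in a..b, f x
  set c := I / (b - a)
  have hexpand : ∫ x in a..b, (f x - c) ^ 2
      = (∫ x in a..b, f x ^ 2) - 2 * c * I + (b - a) * c ^ 2 := by
    simp_rw [sub_sq, mul_assoc 2 _ c, mul_comm _ c, ← mul_assoc]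
    rw [intervalIntegral.integral_add (hf₂.sub (hf.const_mul _)) intervalIntegrable_const,
      intervalIntegral.integral_sub hf₂ (hf.const_mul _), intervalIntegral.integral_const_mul,
      intervalIntegral.integral_const, smul_eq_mul, mul_comm c 2]
  have hnonneg : 0 ≤ ∫ x in a..b, (f x - c) ^ 2 :=
    intervalIntegral.integral_nonneg hab.le fun x _ => sq_nonneg _
  have hcI : c * (b - a) = I := div_mul_cancel₀ _ (sub_pos.mpr hab).ne'
  nlinarith [mul_nonneg (sub_pos.mpr hab).le hnonneg]

theorem intervalIntegral_le_mul_integral_div_self {h : ℝ → ℝ} (ha : 0 < a) (hab : a ≤ b)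
    (hh : ∀ x ∈ Icc a b, 0 ≤ h x) (hh_int : IntervalIntegrable h volume a b)
    (hint : IntervalIntegrable (fun x => h x / x) volume a b) :
    ∫ x in a..b, h x ≤ b * ∫ x in a..b, h x / x := by
  rw [← intervalIntegral.integral_const_mul]
  refine intervalIntegral.integral_mono_on_of_le_Ioo hab hh_int (hint.const_mul b) fun x hx => ?_
  rw [mul_div_assoc', le_div_iff₀ (ha.trans hx.1), mul_comm b]
  exact mul_le_mul_of_nonneg_left hx.2.le (hh x (Ioo_subset_Icc_self hx))

theorem sq_integral_mul_min_le (hD : IntervalIntegrable D volume a b)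
    (hD₀ : ∀ t ∈ Icc a b, 0 ≤ D t) (ha : 0 < a) (hc : c ∈ Icc a b) (κ : ℝ) :
    (κ * ∫ t in a..b, D t * min (t - a) (b - t)) ^ 2
      ≤ b * (b - a) * ∫ s in a..b, (κ * ∫ t in c..s, D t) ^ 2 / s := by
  have hab : a ≤ b := hc.1.trans hc.2
  set G := fun s => κ * ∫ t in c..s, D t
  have hG : ContinuousOn G (uIcc a b) :=
    ((hD.absolutelyContinuousOnInterval_intervalIntegral
      (by rw [uIcc_of_le hab]; exact hc)).continuousOn).const_smul κ
  have hJ : 0 ≤ ∫ t in a..b, D t * min (t - a) (b - t) :=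
    intervalIntegral.integral_nonneg hab fun t ht =>
      mul_nonneg (hD₀ t ht) (le_min (sub_nonneg.2 ht.1) (sub_nonneg.2 ht.2))
  have hmin : |κ| * ∫ t in a..b, D t * min (t - a) (b - t) ≤ ∫ s in a..b, |G s| := by
    simp only [G, abs_mul, intervalIntegral.integral_const_mul]
    exact mul_le_mul_of_nonneg_left (integral_mul_min_le_integral_abs_primitive hD hD₀ hc)
      (abs_nonneg κ)
  calc (κ * ∫ t in a..b, D t * min (t - a) (b - t)) ^ 2
      = (|κ| * ∫ t in a..b, D t * min (t - a) (b - t)) ^ 2 := by rw [mul_pow, mul_pow, sq_abs]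
    _ ≤ (∫ s in a..b, |G s|) ^ 2 := pow_le_pow_left₀ (by positivity) hmin 2
    _ ≤ (b - a) * ∫ s in a..b, |G s| ^ 2 :=
        sq_intervalIntegral_le_mul_integral_sq hab hG.abs.intervalIntegrable
          (hG.abs.pow 2).intervalIntegrable
    _ ≤ (b - a) * (b * ∫ s in a..b, G s ^ 2 / s) := by
        simp_rw [sq_abs]
        gcongr
        refine intervalIntegral_le_mul_integral_div_self ha hab (fun _ _ => sq_nonneg _)
          (hG.pow 2).intervalIntegrable ?_
        refine ((hG.pow 2).div continuousOn_id fun s hs => ?_).intervalIntegrable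
        rw [uIcc_of_le hab] at hs
        exact (ha.trans_le hs.1).ne'
    _ = b * (b - a) * ∫ s in a..b, G s ^ 2 / s := by ring

end Calculus

/-- **General integral bound** (Lemma 4.8).  Suppose `R/2 ≤ r₁ < r₂`, `q ∈ ℤ`,
`ρ(r) = |Φ̂(r) - 2q|²` on `(r₁, r₂)` and `ρ(r₀) = 0` for some `r₀ ∈ (r₁, r₂)`.  Then, with
`δ(r) = min{r - r₁, r₂ - r}`:
`∫_{r₁}^{r₂} ρ(r)/r dr ≥ (2α²/(r₂(r₂-r₁))) (∫_{r₁}^{r₂} 𝒩'(r) δ(r) dr)²`. -/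
theorem general_integral_bound
    (R α : ℝ) (hR : 0 < R) (m : ℕ) (y : Fin m → Plane)
    (r₁ r₂ : ℝ) (hr₁ : R / 2 ≤ r₁) (h₁₂ : r₁ < r₂) (q : ℤ)
    (hq : ∀ r ∈ Set.Ioo r₁ r₂,
      rhoFun α R y r = (α * (1 + 2 * countN R y r) - 2 * q) ^ 2)
    (r₀ : ℝ) (hr₀ : r₀ ∈ Set.Ioo r₁ r₂) (hzero : rhoFun α R y r₀ = 0) :
    2 * α ^ 2 / (r₂ * (r₂ - r₁))
        * (∫ r in r₁..r₂, countN' R y r * min (r - r₁) (r₂ - r)) ^ 2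
      ≤ ∫ r in r₁..r₂, rhoFun α R y r / r := by
  have hr₁₀ : 0 < r₁ := by linarith
  have hflux₀ : α * (1 + 2 * countN R y r₀) - 2 * q = 0 := by
    rw [← sq_eq_zero_iff, ← hq r₀ hr₀, hzero]
  have hrho : ∫ r in r₁..r₂, rhoFun α R y r / r
      = ∫ s in r₁..r₂, (2 * α * ∫ t in r₀..s, countN' R y t) ^ 2 / s := by
    have hne : ∀ᵐ s : ℝ, s ≠ r₂ := by simp [ae_iff, measure_singleton]
    refine intervalIntegral.integral_congr_ae ?_
    filter_upwards [hne] with s hs hmem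
    rw [uIoc_of_le h₁₂.le] at hmem
    rw [hq s ⟨hmem.1, hmem.2.lt_of_ne hs⟩, ← countN_sub_countN hR y (by linarith [hr₀.1])
      (by linarith [hmem.1])]
    congr 2
    linear_combination hflux₀
  have hbound := sq_integral_mul_min_le (intervalIntegrable_countN' hR y r₁ r₂)
    (fun t ht => countN'_nonneg R y (hr₁₀.le.trans ht.1)) hr₁₀ (Ioo_subset_Icc_self hr₀)
    (2 * α)
  rw [hrho, div_mul_eq_mul_div, div_le_iff₀ (by nlinarith)]
  nlinarith [sq_nonneg (α * ∫ r in r₁..r₂, countN' R y r * min (r - r₁) (r₂ - r))]
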